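/- Suppose Φ : L(H) → L(K) satisfies Φ(X†) = Φ(X)† for all X, and X achieves ‖(Φ ⊗ I)(X)‖_tr = ‖Φ ⊗ I‖_tr with ‖X‖_tr = 1. Define the Hermitian matrix Y = (1/2) X ⊗ |0⟩⟨1| + (1/2) X† ⊗ |1⟩⟨0| on an enlarged space with one extra qubit. Then ‖Y‖_tr = 1 and ‖(Φ ⊗ I')(Y)‖_tr = ‖(Φ ⊗ I)(X)‖_tr, where I' is the identity on the enlarged auxiliary space. -/

import Mathlib

open scoped ComplexOrder Matrix

/-- Matrix square root: the positive semidefinite square root of a PSD matrix,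
with junk value 0 for non-PSD matrices. -/
noncomputable def sqrtM {i : Type} [Fintype i] [DecidableEq i] (A : Matrix i i Complex) :
    Matrix i i Complex :=
  letI := Classical.propDecidable A.PosSemidef
  if h : A.PosSemidef then
    (h.1.eigenvectorUnitary : Matrix i i Complex) *
      Matrix.diagonal ((↑) ∘ Real.sqrt ∘ h.1.eigenvalues) *
      (star h.1.eigenvectorUnitary : Matrix i i Complex)
  else 0

/-- Trace norm: trace of the square root of X-dagger-X (sum of singular values). -/
noncomputable def traceNorm {i : Type} [Fintype i] [DecidableEq i] (X : Matrix i i Complex) : Real :=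
  ((sqrtM (Xᴴ * X)).trace).re

/-- Fidelity F(rho, xi) = trace of the square root of (sqrt rho * xi * sqrt rho). -/
noncomputable def fidelity {i : Type} [Fintype i] [DecidableEq i] (ρ ξ : Matrix i i Complex) : Real :=
  ((sqrtM (sqrtM ρ * ξ * sqrtM ρ)).trace).re

/-- Outer product of vectors. -/
noncomputable def outer {i : Type} (ψ φ : i → Complex) : Matrix i i Complex :=
  Matrix.of fun p q => ψ p * star (φ q)

/-- Partial trace over the first tensor factor. -/
noncomputable def ptraceFst {α β : Type} [Fintype α] (X : Matrix (α × β) (α × β) Complex) :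
    Matrix β β Complex :=
  Matrix.of fun i j => ∑ a : α, X (a, i) (a, j)

/-- Partial trace over the second tensor factor. -/
noncomputable def ptraceSnd {α β : Type} [Fintype β] (X : Matrix (α × β) (α × β) Complex) :
    Matrix α α Complex :=
  Matrix.of fun i j => ∑ b : β, X (i, b) (j, b)

/-- The extension of a map on matrices by the identity on an auxiliary space. -/
noncomputable def extendId {i k : Type} (f : Matrix i i Complex → Matrix k k Complex)
    (α : Type) (X : Matrix (i × α) (i × α) Complex) : Matrix (k × α) (k × α) Complex :=
  Matrix.of fun p q => f (Matrix.of fun a b => X (a, p.2) (b, q.2)) p.1 q.1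

/-- Complete positivity: all extensions by an identity map PSD matrices to PSD matrices. -/
def IsCompletelyPositive {i k : Type} [Fintype i] [DecidableEq i] [Fintype k] [DecidableEq k]
    (f : Matrix i i Complex → Matrix k k Complex) : Prop :=
  ∀ (r : ℕ) (X : Matrix (i × Fin r) (i × Fin r) Complex), X.PosSemidef →
    (extendId f (Fin r) X).PosSemidef

/-- Trace preservation. -/
def IsTracePreserving {i k : Type} [Fintype i] [Fintype k]
    (f : Matrix i i Complex → Matrix k k Complex) : Prop :=
  ∀ X : Matrix i i Complex, (f X).trace = X.trace

/-- The diamond norm: the supremum of the trace norms of (f tensor I)(X) over all X of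
trace norm one, with the identity on an auxiliary space of the same dimension as the input. -/
noncomputable def dnorm {i k : Type} [Fintype i] [DecidableEq i] [Fintype k] [DecidableEq k]
    (f : Matrix i i Complex → Matrix k k Complex) : Real :=
  sSup {t : Real | ∃ X : Matrix (i × i) (i × i) Complex,
    traceNorm X = 1 ∧ t = traceNorm (extendId f i X)}

/-!
Up to reindexing, `Y = ½ [[0, X], [X†, 0]]`, so `Y†Y = ¼ (X X† ⊕ X† X)`. The trace norm of `X`
is the sum of the square roots of the roots of the characteristic polynomial of `X†X`, and `X X†`,
`X† X` have the same characteristic polynomial; hence `‖Y‖ = ½ (‖X†‖ + ‖X‖) = ‖X‖`. Since `Φ`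
preserves Hermiticity, `(Φ ⊗ I')(Y)` is the same dilation of `(Φ ⊗ I)(X)`, so the same
computation applies to it.
-/

open Matrix

lemma Matrix.IsHermitian.trace_cfc {𝕜 ι : Type*} [RCLike 𝕜] [Fintype ι] [DecidableEq ι]
    {A : Matrix ι ι 𝕜} (hA : A.IsHermitian) (f : ℝ → ℝ) :
    (cfc f A).trace = ∑ i, (f (hA.eigenvalues i) : 𝕜) := by
  rw [hA.cfc_eq, IsHermitian.cfc, Unitary.conjStarAlgAut_apply, trace_mul_cycle,
    Unitary.coe_star_mul_self, Matrix.one_mul, trace_diagonal]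
  rfl

section TraceNorm

variable {ι : Type} [Fintype ι] [DecidableEq ι]

lemma sqrtM_eq_cfc {A : Matrix ι ι ℂ} (hA : A.PosSemidef) : sqrtM A = cfc Real.sqrt A := by
  rw [sqrtM, dif_pos hA, hA.1.cfc_eq, IsHermitian.cfc, Unitary.conjStarAlgAut_apply]
  rfl

lemma traceNorm_eq_sum_sqrt_roots_charpoly (X : Matrix ι ι ℂ) :
    traceNorm X = ((Xᴴ * X).charpoly.roots.map fun z => √z.re).sum := by
  have hX := posSemidef_conjTranspose_mul_self X
  rw [traceNorm, sqrtM_eq_cfc hX, hX.1.trace_cfc, hX.1.roots_charpoly_eq_eigenvalues]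
  simp [Complex.re_sum]

lemma traceNorm_conjTranspose (X : Matrix ι ι ℂ) : traceNorm Xᴴ = traceNorm X := by
  rw [traceNorm_eq_sum_sqrt_roots_charpoly, traceNorm_eq_sum_sqrt_roots_charpoly, conjTranspose_conjTranspose,
    charpoly_mul_comm]

lemma traceNorm_reindex {κ : Type} [Fintype κ] [DecidableEq κ] (e : ι ≃ κ) (X : Matrix ι ι ℂ) :
    traceNorm (reindex e e X) = traceNorm X := by
  rw [traceNorm_eq_sum_sqrt_roots_charpoly, traceNorm_eq_sum_sqrt_roots_charpoly, reindex_apply, conjTranspose_submatrix,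
    submatrix_mul_equiv, ← reindex_apply, charpoly_reindex]

lemma traceNorm_fromBlocks_zero₁₁_zero₂₂ (B C : Matrix ι ι ℂ) :
    traceNorm (fromBlocks 0 B C 0) = traceNorm B + traceNorm C := by
  have hsq : (fromBlocks 0 B C 0)ᴴ * fromBlocks 0 B C 0 = fromBlocks (Cᴴ * C) 0 0 (Bᴴ * B) := by
    simp [fromBlocks_conjTranspose, fromBlocks_multiply]
  rw [traceNorm_eq_sum_sqrt_roots_charpoly, hsq, charpoly_fromBlocks_zero₁₂, Polynomial.roots_mul
    (mul_ne_zero (charpoly_monic _).ne_zero (charpoly_monic _).ne_zero), Multiset.map_add,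
    Multiset.sum_add, ← traceNorm_eq_sum_sqrt_roots_charpoly, ← traceNorm_eq_sum_sqrt_roots_charpoly, add_comm]

lemma traceNorm_smul (c : ℂ) (X : Matrix ι ι ℂ) : traceNorm (c • X) = ‖c‖ * traceNorm X := by
  have hX := posSemidef_conjTranspose_mul_self X
  have hsq : (c • X)ᴴ * (c • X) = (‖c‖ ^ 2 : ℝ) • (Xᴴ * X) := by
    rw [conjTranspose_smul, smul_mul_smul_comm, Complex.star_def, Complex.conj_mul',
      ← Complex.coe_smul]
    norm_cast
  have hsqrt : cfc Real.sqrt ((‖c‖ ^ 2 : ℝ) • (Xᴴ * X)) = ‖c‖ • cfc Real.sqrt (Xᴴ * X) := by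
    have hXsa : IsSelfAdjoint (Xᴴ * X) := hX.1
    rw [← cfc_comp_smul (‖c‖ ^ 2) Real.sqrt (Xᴴ * X), ← cfc_const_mul ‖c‖ Real.sqrt (Xᴴ * X)]
    congr! 2 with x
    rw [smul_eq_mul, Real.sqrt_mul (sq_nonneg _), Real.sqrt_sq (norm_nonneg _)]
  rw [traceNorm, traceNorm, sqrtM_eq_cfc (posSemidef_conjTranspose_mul_self _), sqrtM_eq_cfc hX,
    hsq, hsqrt, trace_smul]
  simp

end TraceNorm

section HermitianDilation

variable {ι κ α : Type}

noncomputable def hermDilation (W : Matrix (ι × α) (ι × α) ℂ) :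
    Matrix (ι × (α × Fin 2)) (ι × (α × Fin 2)) ℂ :=
  of fun s t =>
    if s.2.2 = 0 ∧ t.2.2 = 1 then (1 / 2 : ℂ) * W (s.1, s.2.1) (t.1, t.2.1)
    else if s.2.2 = 1 ∧ t.2.2 = 0 then (1 / 2 : ℂ) * star (W (t.1, t.2.1) (s.1, s.2.1))
    else 0

def prodProdFinTwoEquivSum (ι α : Type) : ι × (α × Fin 2) ≃ (ι × α) ⊕ (ι × α) :=
  (Equiv.prodAssoc ι α (Fin 2)).symm.trans <| (Equiv.prodComm _ _).trans <|
    (Equiv.prodCongr finTwoEquiv (Equiv.refl _)).trans (Equiv.boolProdEquivSum _)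

lemma hermDilation_eq_reindex_fromBlocks (W : Matrix (ι × α) (ι × α) ℂ) :
    hermDilation W = reindex (prodProdFinTwoEquivSum ι α).symm (prodProdFinTwoEquivSum ι α).symm
      ((1 / 2 : ℂ) • fromBlocks 0 W Wᴴ 0) := by
  ext ⟨i, a, k⟩ ⟨j, b, l⟩
  fin_cases k <;> fin_cases l <;> simp [hermDilation, prodProdFinTwoEquivSum, finTwoEquiv]

lemma traceNorm_hermDilation [Fintype ι] [DecidableEq ι] [Fintype α] [DecidableEq α]
    (W : Matrix (ι × α) (ι × α) ℂ) : traceNorm (hermDilation W) = traceNorm W := by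
  rw [hermDilation_eq_reindex_fromBlocks, traceNorm_reindex, traceNorm_smul,
    traceNorm_fromBlocks_zero₁₁_zero₂₂, traceNorm_conjTranspose]
  norm_num
  ring

lemma extendId_hermDilation (Φ : Matrix ι ι ℂ →ₗ[ℂ] Matrix κ κ ℂ) (hΦ : ∀ X, Φ Xᴴ = (Φ X)ᴴ)
    (W : Matrix (ι × α) (ι × α) ℂ) :
    extendId Φ (α × Fin 2) (hermDilation W) = hermDilation (extendId Φ α W) := by
  ext ⟨i, a, k⟩ ⟨j, b, l⟩
  have hblock : (of fun x y => hermDilation W (x, a, k) (y, b, l)) =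
      if k = 0 ∧ l = 1 then (1 / 2 : ℂ) • of (fun x y => W (x, a) (y, b))
      else if k = 1 ∧ l = 0 then (1 / 2 : ℂ) • (of fun x y => W (x, b) (y, a))ᴴ else 0 := by
    ext x y
    simp only [hermDilation, of_apply]
    split_ifs <;> simp_all
  change Φ (of fun x y => hermDilation W (x, a, k) (y, b, l)) i j = _
  rw [hblock]
  simp only [hermDilation, extendId, of_apply]
  split_ifs <;> simp only [map_smul, map_zero, hΦ, Matrix.smul_apply, conjTranspose_apply,
    Matrix.zero_apply, smul_eq_mul]

end HermitianDilation

theorem hermitian_trick_achieves_norm_general {n m : ℕ} {α : Type} [Fintype α] [DecidableEq α]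
    (Φ : Matrix (Fin n) (Fin n) Complex →ₗ[Complex] Matrix (Fin m) (Fin m) Complex)
    (hherm : ∀ X : Matrix (Fin n) (Fin n) Complex, Φ Xᴴ = (Φ X)ᴴ)
    (X : Matrix (Fin n × α) (Fin n × α) Complex)
    (hX : traceNorm X = 1)
    (Y : Matrix (Fin n × (α × Fin 2)) (Fin n × (α × Fin 2)) Complex)
    (hY : Y = Matrix.of fun s t =>
      if s.2.2 = 0 ∧ t.2.2 = 1 then (1 / 2 : Complex) * X (s.1, s.2.1) (t.1, t.2.1)
      else if s.2.2 = 1 ∧ t.2.2 = 0 then (1 / 2 : Complex) * star (X (t.1, t.2.1) (s.1, s.2.1))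
      else 0) :
    traceNorm Y = 1 ∧
      traceNorm (extendId (⇑Φ) (α × Fin 2) Y) = traceNorm (extendId (⇑Φ) α X) := by
  change Y = hermDilation X at hY
  subst hY
  exact ⟨(traceNorm_hermDilation X).trans hX,
    by rw [extendId_hermDilation Φ hherm, traceNorm_hermDilation]⟩

/-- For Hermiticity-preserving Φ, if X of trace norm one achieves the norm of Φ ⊗ I, then
the Hermitian matrix Y = (1/2) X ⊗ |0⟩⟨1| + (1/2) X† ⊗ |1⟩⟨0| has trace norm one and
achieves the same value. -/
theorem hermitian_trick_achieves_norm {n m : ℕ} {α : Type} [Fintype α] [DecidableEq α]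
    (Φ : Matrix (Fin n) (Fin n) Complex →ₗ[Complex] Matrix (Fin m) (Fin m) Complex)
    (hherm : ∀ X : Matrix (Fin n) (Fin n) Complex, Φ Xᴴ = (Φ X)ᴴ)
    (X : Matrix (Fin n × α) (Fin n × α) Complex)
    (hX : traceNorm X = 1)
    (hmax : ∀ Z : Matrix (Fin n × α) (Fin n × α) Complex, traceNorm Z = 1 →
      traceNorm (extendId (⇑Φ) α Z) ≤ traceNorm (extendId (⇑Φ) α X))
    (Y : Matrix (Fin n × (α × Fin 2)) (Fin n × (α × Fin 2)) Complex)
    (hY : Y = Matrix.of fun s t =>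
      if s.2.2 = 0 ∧ t.2.2 = 1 then (1 / 2 : Complex) * X (s.1, s.2.1) (t.1, t.2.1)
      else if s.2.2 = 1 ∧ t.2.2 = 0 then (1 / 2 : Complex) * star (X (t.1, t.2.1) (s.1, s.2.1))
      else 0) :
    traceNorm Y = 1 ∧
      traceNorm (extendId (⇑Φ) (α × Fin 2) Y) = traceNorm (extendId (⇑Φ) α X) :=
  hermitian_trick_achieves_norm_general Φ hherm X hX Y hY
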